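/- For all positive integers s and t, K(s,t) ≥ 2^(s·t − t + 1). -/
import Mathlib


/-- The pair `(K(s,t), K'(s,t))` of auxiliary functions, defined for positive integers `s, t`:
`K(1,t) = 2`, `K'(1,t) = 5`; `K(s,1) = 2^s`, `K'(s,1) = 2^s + 3`; and for `s, t > 1`,
`K(s,t) = K(s,t-1) * K(s-1, K'(s,t-1))` and
`K'(s,t) = K'(s,t-1) * K(s-1, K'(s,t-1)) + K'(s-1, K'(s,t-1))`.
(The value at arguments equal to `0` is junk.) -/
def KK : ℕ → ℕ → ℕ × ℕ
  | 0, _ => (0, 0)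
  | 1, _ => (2, 5)
  | _+2, 0 => (0, 0)
  | s+2, 1 => (2^(s+2), 2^(s+2) + 3)
  | s+2, t+2 =>
    let p := KK (s+2) (t+1)
    let q := KK (s+1) p.2
    (p.1 * q.1, p.2 * q.1 + q.2)
termination_by s t => (s, t)

/-- The function `K(s,t)`. -/
def K (s t : ℕ) : ℕ := (KK s t).1

/-- The function `K'(s,t)`. -/
def K' (s t : ℕ) : ℕ := (KK s t).2

theorem KK_aux : ∀ s t : ℕ, 1 ≤ s → 1 ≤ t →
    1 ≤ (KK s t).2 ∧ 2 ^ ((s-1) * t + 1) ≤ (KK s t).1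
  | 0, _, h, _ => absurd h (by simp)
  | 1, t, _, _ => by simp [KK]
  | s+2, 0, _, h => absurd h (by simp)
  | s+2, 1, _, _ => by simp [KK]
  | s+2, t+2, _, _ => by
    have IH1 := KK_aux (s+2) (t+1) (by omega) (by omega)
    have IH2 := KK_aux (s+1) (KK (s+2) (t+1)).2 (by omega) IH1.1
    simp only [KK]
    constructor
    · have := IH2.1; simp; omega
    · have h1 : 2 ^ (s * (KK (s+2) (t+1)).2 + 1) ≤ (KK (s+1) (KK (s+2) (t+1)).2).1 := by
        simpa using IH2.2
      have h2 : (s+1) * (t+1) + 1 + (s+1) = (s+1) * (t+2) + 1 := by ring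
      have h3 : s + 1 ≤ s * (KK (s+2) (t+1)).2 + 1 := by
        have := IH1.1; nlinarith
      calc 2 ^ ((s+2-1) * (t+2) + 1) = 2 ^ ((s+1) * (t+1) + 1) * 2 ^ (s+1) := by
            rw [← pow_add, h2]; norm_num
        _ ≤ (KK (s+2) (t+1)).1 * (KK (s+1) (KK (s+2) (t+1)).2).1 := by
            apply Nat.mul_le_mul
            · simpa using IH1.2
            · exact le_trans (Nat.pow_le_pow_right (by norm_num) h3) h1
        _ = _ := rfl
termination_by s t => (s, t)

/-- Lemma (K-properties v): for all positive integers `s` and `t`,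
`K(s,t) ≥ 2^(s*t - t + 1)`. -/
theorem K_ge_two_pow (s t : ℕ) (hs : 0 < s) (ht : 0 < t) :
    2 ^ (s * t - t + 1) ≤ K s t := by
  obtain ⟨s, rfl⟩ := Nat.exists_eq_add_of_le hs
  have h := (KK_aux (1+s) t (by omega) ht).2
  have : (1+s) * t - t = (1+s-1) * t := by simp [add_mul]
  rw [this]
  exact h
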